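/- Let E be a real inner product space, f : E → ℝ differentiable with f(y) ≥ f* for all y and some f* ∈ ℝ. Let γ > 1, η ∈ (0,1), c₄ > 0, α̲ > 0, ε > 0, and ν ∈ (0,1) with ν·η·c₄ ≥ (1 − ν)·(γ + 1 − γ⁻¹). Let (x_k)_{k∈ℕ} in E and (α_k)_{k∈ℕ} positive reals be sequences such that α_k ≥ α̲ for all k, and for every k either (successful) f(x_k) − f(x_{k+1}) ≥ η·c₄·α_k·‖∇f(x_{k+1})‖^{3/2} and α_{k+1} ≤ γ·α_k, or (unsuccessful) x_{k+1} = x_k and α_{k+1} = γ⁻¹·α_k. Define T_ε := min{k ∈ ℕ : ‖∇f(x_{k+1})‖ ≤ ε}. Then T_ε ≤ (ν·(f(x_0) − f*) + (1 − ν)·α_0·‖∇f(x_0)‖^{3/2}) / ((1 − ν)·(1 − γ⁻¹)·α̲·ε^{3/2}). -/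

import Mathlib

/-!
The progress measure `Φ_k = ν (f(x_k) - f*) + (1 - ν) α_k ‖∇f(x_k)‖^{3/2}` is nonnegative and,
thanks to the coupling condition `ν η c₄ ≥ (1 - ν)(γ + 1 - γ⁻¹)`, drops by at least
`(1 - ν)(1 - γ⁻¹) α_k ‖∇f(x_{k+1})‖^{3/2}` at every iteration, successful or not: a successful
step pays for the possible growth of `α` out of the decrease of `f`, while an unsuccessful step
leaves `x` and hence `‖∇f‖` unchanged and shrinks `α` by `γ⁻¹`. Before `T_ε` each drop is
at least `(1 - ν)(1 - γ⁻¹) α̲ ε^{3/2}`, and telescoping bounds `T_ε` times this by `Φ_0`.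
-/

open Finset

theorem nat_mul_le_of_le_sub_succ {Φ : ℕ → ℝ} {δ : ℝ} {T : ℕ} (hΦT : 0 ≤ Φ T)
    (hstep : ∀ k < T, δ ≤ Φ k - Φ (k + 1)) : (T : ℝ) * δ ≤ Φ 0 := by
  have htelescope : ∑ _k ∈ range T, δ ≤ Φ 0 - Φ T := by
    rw [← sum_range_sub']
    exact sum_le_sum fun k hk => hstep k (mem_range.mp hk)
  rw [sum_const, card_range, nsmul_eq_mul] at htelescope
  linarith

section ProgressMeasure

variable {E : Type*} [NormedAddCommGroup E] [InnerProductSpace ℝ E] [CompleteSpace E]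

noncomputable def progressMeasure (ν fstar : ℝ) (f : E → ℝ) (x : E) (a : ℝ) : ℝ :=
  ν * (f x - fstar) + (1 - ν) * a * ‖gradient f x‖ ^ ((3 : ℝ) / 2)

variable {ν fstar : ℝ} {f : E → ℝ}

theorem progressMeasure_nonneg (hfstar : ∀ y, fstar ≤ f y) (hν : 0 ≤ ν) (hν1 : ν ≤ 1)
    {x : E} {a : ℝ} (ha : 0 ≤ a) : 0 ≤ progressMeasure ν fstar f x a := by
  have hgrad := Real.rpow_nonneg (norm_nonneg (gradient f x)) ((3 : ℝ) / 2)
  have hval := sub_nonneg.mpr (hfstar x)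
  unfold progressMeasure
  positivity

theorem progressMeasure_sub_progressMeasure_of_successful {γ κ : ℝ} (hν : 0 ≤ ν) (hν1 : ν ≤ 1)
    (hcoupling : ν * κ ≥ (1 - ν) * (γ + 1 - γ⁻¹)) {x x' : E} {a a' : ℝ} (ha : 0 ≤ a)
    (hdecrease : f x - f x' ≥ κ * a * ‖gradient f x'‖ ^ ((3 : ℝ) / 2)) (ha' : a' ≤ γ * a) :
    (1 - ν) * (1 - γ⁻¹) * a * ‖gradient f x'‖ ^ ((3 : ℝ) / 2) ≤
      progressMeasure ν fstar f x a - progressMeasure ν fstar f x' a' := by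
  set g := ‖gradient f x‖ ^ ((3 : ℝ) / 2)
  set g' := ‖gradient f x'‖ ^ ((3 : ℝ) / 2)
  have hg : 0 ≤ g := Real.rpow_nonneg (norm_nonneg _) _
  have hg' : 0 ≤ g' := Real.rpow_nonneg (norm_nonneg _) _
  have hvalue : ν * (κ * a * g') ≤ ν * (f x - f x') := mul_le_mul_of_nonneg_left hdecrease hν
  have hstepsize : (1 - ν) * (a' * g') ≤ (1 - ν) * (γ * a * g') :=
    mul_le_mul_of_nonneg_left (mul_le_mul_of_nonneg_right ha' hg') (by linarith)
  have hcoupled : (1 - ν) * (γ + 1 - γ⁻¹) * (a * g') ≤ ν * κ * (a * g') :=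
    mul_le_mul_of_nonneg_right hcoupling (mul_nonneg ha hg')
  have hold : 0 ≤ (1 - ν) * a * g := by have := sub_nonneg.mpr hν1; positivity
  unfold progressMeasure
  linarith

theorem progressMeasure_sub_progressMeasure_of_unsuccessful (γ : ℝ) (x : E) (a : ℝ) :
    progressMeasure ν fstar f x a - progressMeasure ν fstar f x (γ⁻¹ * a) =
      (1 - ν) * (1 - γ⁻¹) * a * ‖gradient f x‖ ^ ((3 : ℝ) / 2) := by
  unfold progressMeasure
  ring

end ProgressMeasure

theorem stmt_12_general {E : Type*} [NormedAddCommGroup E] [InnerProductSpace ℝ E] [CompleteSpace E]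
    (f : E → ℝ) (fstar : ℝ) (hfstar : ∀ y, fstar ≤ f y)
    (γ η c₄ αlow ε ν : ℝ) (hγ : 1 < γ)
    (hαlow : 0 < αlow) (hε : 0 < ε) (hν : 0 < ν) (hν1 : ν < 1)
    (hνcond : ν * η * c₄ ≥ (1 - ν) * (γ + 1 - γ⁻¹))
    (x : ℕ → E) (α : ℕ → ℝ) (hαge : ∀ k, αlow ≤ α k)
    (hcase : ∀ k : ℕ,
      (f (x k) - f (x (k + 1)) ≥
          η * c₄ * α k * ‖gradient f (x (k + 1))‖ ^ ((3 : ℝ) / 2) ∧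
        α (k + 1) ≤ γ * α k) ∨
      (x (k + 1) = x k ∧ α (k + 1) = γ⁻¹ * α k)) :
    ∀ T : ℕ, (∀ k < T, ε < ‖gradient f (x (k + 1))‖) →
      (T : ℝ) ≤ (ν * (f (x 0) - fstar) + (1 - ν) * α 0 * ‖gradient f (x 0)‖ ^ ((3 : ℝ) / 2)) /
        ((1 - ν) * (1 - γ⁻¹) * αlow * ε ^ ((3 : ℝ) / 2)) := by
  intro T hT
  set Φ : ℕ → ℝ := fun k => progressMeasure ν fstar f (x k) (α k)
  have hα : ∀ k, 0 ≤ α k := fun k => hαlow.le.trans (hαge k)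
  have hdecay : 0 < (1 - ν) * (1 - γ⁻¹) := mul_pos (by linarith) (by simp [inv_lt_one_of_one_lt₀ hγ])
  have hstep : ∀ k < T, (1 - ν) * (1 - γ⁻¹) * αlow * ε ^ ((3 : ℝ) / 2) ≤ Φ k - Φ (k + 1) := by
    intro k hk
    have hgrad : αlow * ε ^ ((3 : ℝ) / 2) ≤ α k * ‖gradient f (x (k + 1))‖ ^ ((3 : ℝ) / 2) :=
      mul_le_mul (hαge k) (Real.rpow_le_rpow hε.le (hT k hk).le (by norm_num)) (by positivity)
        (hα k)
    calc (1 - ν) * (1 - γ⁻¹) * αlow * ε ^ ((3 : ℝ) / 2)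
        ≤ (1 - ν) * (1 - γ⁻¹) * α k * ‖gradient f (x (k + 1))‖ ^ ((3 : ℝ) / 2) := by
          simpa only [mul_assoc] using mul_le_mul_of_nonneg_left hgrad hdecay.le
      _ ≤ Φ k - Φ (k + 1) := by
          rcases hcase k with ⟨hdecrease, hα'⟩ | ⟨hx, hα'⟩
          · rw [mul_assoc ν] at hνcond
            exact progressMeasure_sub_progressMeasure_of_successful hν.le hν1.le hνcond (hα k)
              hdecrease hα'
          · simp only [Φ, hx, hα', progressMeasure_sub_progressMeasure_of_unsuccessful, le_refl]
  rw [le_div_iff₀ (by positivity)]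
  exact nat_mul_le_of_le_sub_succ (progressMeasure_nonneg hfstar hν.le hν1.le (hα T)) hstep

/-- `O(ε^(-3/2))` iteration complexity for the cubicly regularized Newton instance of the
adaptive deterministic framework.  The stopping time `T_ε = min {k : ‖∇f(x_{k+1})‖ ≤ ε}`
is captured by quantifying over all `T` such that `ε < ‖∇f(x_{k+1})‖` for all `k < T`. -/
theorem stmt_12 {E : Type*} [NormedAddCommGroup E] [InnerProductSpace ℝ E] [CompleteSpace E]
    (f : E → ℝ) (hf : Differentiable ℝ f) (fstar : ℝ) (hfstar : ∀ y, fstar ≤ f y)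
    (γ η c₄ αlow ε ν : ℝ) (hγ : 1 < γ) (hη : 0 < η) (hη1 : η < 1)
    (hc₄ : 0 < c₄) (hαlow : 0 < αlow) (hε : 0 < ε) (hν : 0 < ν) (hν1 : ν < 1)
    (hνcond : ν * η * c₄ ≥ (1 - ν) * (γ + 1 - γ⁻¹))
    (x : ℕ → E) (α : ℕ → ℝ) (hαpos : ∀ k, 0 < α k) (hαge : ∀ k, αlow ≤ α k)
    (hcase : ∀ k : ℕ,
      (f (x k) - f (x (k + 1)) ≥
          η * c₄ * α k * ‖gradient f (x (k + 1))‖ ^ ((3 : ℝ) / 2) ∧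
        α (k + 1) ≤ γ * α k) ∨
      (x (k + 1) = x k ∧ α (k + 1) = γ⁻¹ * α k)) :
    ∀ T : ℕ, (∀ k < T, ε < ‖gradient f (x (k + 1))‖) →
      (T : ℝ) ≤ (ν * (f (x 0) - fstar) + (1 - ν) * α 0 * ‖gradient f (x 0)‖ ^ ((3 : ℝ) / 2)) /
        ((1 - ν) * (1 - γ⁻¹) * αlow * ε ^ ((3 : ℝ) / 2)) :=
  stmt_12_general f fstar hfstar γ η c₄ αlow ε ν hγ hαlow hε hν hν1 hνcond x α hαge hcase
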